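/- Let ρ, k : ℝ → ℝ³ be differentiable at t with derivatives ρ̇(t), k̇(t); suppose ρ(t) ≠ 0 and ẑ(t) × k(t) ≠ 0 where ẑ(s) = ρ(s)/‖ρ(s)‖, and suppose the map s ↦ x̂(s) = (ẑ(s) × k(s))/‖ẑ(s) × k(s)‖ is differentiable at t; set ŷ(s) = ẑ(s) × x̂(s). Define ω_{z⊥}(t) = (ρ(t) × ρ̇(t))/‖ρ(t)‖², ω_y(t) = ⟨ω_{z⊥}(t), ŷ(t)⟩, ω_z(t) = (ω_y(t)·⟨k(t), ẑ(t)⟩ − ⟨k̇(t), x̂(t)⟩)/⟨k(t), ŷ(t)⟩, and ω_D(t) = ω_{z⊥}(t) + ω_z(t)·ẑ(t). Then the derivatives at t of ẑ, x̂ and ŷ equal ω_D(t) × ẑ(t), ω_D(t) × x̂(t) and ω_D(t) × ŷ(t), respectively. -/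

import Mathlib

/-! Both ẑ and x̂ are normalisations, and the derivative of `v / ‖v‖` is
`((v × v̇) / ‖v‖²) × (v / ‖v‖)`. For ẑ this is already `ω_{z⊥} × ẑ = ω_D × ẑ`. For x̂ it only
shows that `ẋ ⊥ x̂`; the two remaining frame components of `ẋ` come from differentiating
`⟪x̂, ẑ⟫ = 0` and `⟪x̂, k⟫ = 0` (the latter after expanding `k = k_y ŷ + k_z ẑ`, which is where
`k_y ≠ 0` enters), and they agree with those of `ω_D × x̂`. Finally `ŷ = ẑ × x̂` rotates with the
same `ω_D` by the Leibniz identity `ω × (a × b) = (ω × a) × b + a × (ω × b)`. -/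

open scoped RealInnerProductSpace

noncomputable def cross3 (a b : EuclideanSpace ℝ (Fin 3)) : EuclideanSpace ℝ (Fin 3) :=
  (EuclideanSpace.equiv (Fin 3) ℝ).symm
    (crossProduct ((EuclideanSpace.equiv (Fin 3) ℝ) a) ((EuclideanSpace.equiv (Fin 3) ℝ) b))

local notation "E3" => EuclideanSpace ℝ (Fin 3)

open scoped Matrix

section Cross3

@[simp]
lemma ofLp_cross3 (a b : E3) : (cross3 a b).ofLp = a.ofLp ⨯₃ b.ofLp := rfl

lemma inner_eq_ofLp_dotProduct (a b : E3) : ⟪a, b⟫ = a.ofLp ⬝ᵥ b.ofLp := by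
  rw [EuclideanSpace.inner_eq_star_dotProduct, dotProduct_comm]; rfl

noncomputable def cross3Bilin : E3 →L[ℝ] E3 →L[ℝ] E3 :=
  ((crossProduct.compl₁₂ (EuclideanSpace.equiv (Fin 3) ℝ).toLinearMap
    (EuclideanSpace.equiv (Fin 3) ℝ).toLinearMap).compr₂
      (EuclideanSpace.equiv (Fin 3) ℝ).symm.toLinearMap).toContinuousBilinearMap

@[simp]
lemma cross3Bilin_apply (a b : E3) : cross3Bilin a b = cross3 a b := rfl

variable (a b c : E3)

lemma cross3_add_left : cross3 (a + b) c = cross3 a c + cross3 b c := by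
  simp only [← cross3Bilin_apply, map_add, add_apply]

lemma cross3_smul_left (r : ℝ) : cross3 (r • a) b = r • cross3 a b := by
  simp only [← cross3Bilin_apply, map_smul, smul_apply]

lemma cross3_smul_right (r : ℝ) : cross3 a (r • b) = r • cross3 a b := by
  simp only [← cross3Bilin_apply, map_smul]

lemma cross3_zero_right : cross3 a 0 = 0 :=
  WithLp.ofLp_injective _ (by simp)

lemma cross3_self : cross3 a a = 0 :=
  WithLp.ofLp_injective _ (by simp)

lemma neg_cross3 : -cross3 a b = cross3 b a :=
  WithLp.ofLp_injective _ (by simp [cross_anticomm])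

lemma inner_cross3_self_left : ⟪cross3 a b, a⟫ = 0 := by
  simp [inner_eq_ofLp_dotProduct, dotProduct_comm _ (a.ofLp)]

lemma inner_cross3_self_right : ⟪cross3 a b, b⟫ = 0 := by
  simp [inner_eq_ofLp_dotProduct, dotProduct_comm _ (b.ofLp)]

lemma inner_cross3_left : ⟪cross3 a b, c⟫ = ⟪a, cross3 b c⟫ := by
  simp only [inner_eq_ofLp_dotProduct, ofLp_cross3]
  rw [dotProduct_comm, triple_product_permutation]

lemma inner_cross3_cross3 (d : E3) :
    ⟪cross3 a b, cross3 c d⟫ = ⟪a, c⟫ * ⟪b, d⟫ - ⟪a, d⟫ * ⟪b, c⟫ := by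
  simp only [inner_eq_ofLp_dotProduct, ofLp_cross3, cross_dot_cross]

lemma cross3_cross3 : cross3 (cross3 a b) c = ⟪a, c⟫ • b - ⟪b, c⟫ • a :=
  WithLp.ofLp_injective _ (by simp [inner_eq_ofLp_dotProduct, cross_cross_eq_smul_sub_smul])

lemma cross3_cross3' : cross3 a (cross3 b c) = ⟪a, c⟫ • b - ⟪a, b⟫ • c :=
  WithLp.ofLp_injective _ (by
    simp [inner_eq_ofLp_dotProduct, cross_cross_eq_smul_sub_smul', dotProduct_comm b.ofLp])

lemma leibniz_cross3 : cross3 a (cross3 b c) = cross3 (cross3 a b) c + cross3 b (cross3 a c) :=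
  WithLp.ofLp_injective _ (by simp only [ofLp_cross3, WithLp.ofLp_add]; exact leibniz_cross _ _ _)

theorem HasDerivAt.cross3 {f g : ℝ → E3} {f' g' : E3} {t : ℝ} (hf : HasDerivAt f f' t)
    (hg : HasDerivAt g g' t) :
    HasDerivAt (fun s => cross3 (f s) (g s)) (cross3 (f t) g' + cross3 f' (g t)) t :=
  cross3Bilin.hasDerivAt_of_bilinear (fun _ => hf) (fun _ => hg)

end Cross3

section InnerProduct

variable {F : Type*} [NormedAddCommGroup F] [InnerProductSpace ℝ F] {f g : ℝ → F} {f' g' : F}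
  {t : ℝ}

lemma inner_inv_norm_smul_self {v : F} (h0 : v ≠ 0) : ⟪‖v‖⁻¹ • v, ‖v‖⁻¹ • v⟫ = 1 := by
  have hn : ‖v‖ ≠ 0 := norm_ne_zero_iff.2 h0
  rw [real_inner_smul_left, real_inner_smul_right, real_inner_self_eq_norm_sq]
  field_simp

theorem HasDerivAt.norm (hf : HasDerivAt f f' t) (h0 : f t ≠ 0) :
    HasDerivAt (fun s => ‖f s‖) (⟪f t, f'⟫ / ‖f t‖) t := by
  have hsq := hf.norm_sq.sqrt (by positivity)
  simp only [Real.sqrt_sq (norm_nonneg _)] at hsq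
  convert hsq using 1
  field_simp

theorem HasDerivAt.inv_norm_smul (hf : HasDerivAt f f' t) (h0 : f t ≠ 0) :
    HasDerivAt (fun s => ‖f s‖⁻¹ • f s) (‖f t‖⁻¹ • f' - (⟪f t, f'⟫ / ‖f t‖ ^ 3) • f t) t := by
  refine (((hf.norm h0).inv (norm_ne_zero_iff.2 h0)).smul hf).congr_deriv ?_
  rw [sub_eq_add_neg, ← neg_smul]
  congr 2
  ring

theorem inner_add_inner_eq_zero_of_inner_eq_const (hf : HasDerivAt f f' t)
    (hg : HasDerivAt g g' t) {c : ℝ} (h : ∀ s, ⟪f s, g s⟫ = c) : ⟪f t, g'⟫ + ⟪f', g t⟫ = 0 :=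
  (hf.inner ℝ hg).unique (by simpa only [h] using hasDerivAt_const t c)

end InnerProduct

theorem HasDerivAt.inv_norm_smul_eq_cross3 {v : ℝ → E3} {v' : E3} {t : ℝ}
    (hv : HasDerivAt v v' t) (h0 : v t ≠ 0) :
    HasDerivAt (fun s => ‖v s‖⁻¹ • v s)
      (_root_.cross3 ((‖v t‖ ^ 2)⁻¹ • _root_.cross3 (v t) v') (‖v t‖⁻¹ • v t)) t := by
  refine (hv.inv_norm_smul h0).congr_deriv ?_
  have hn : ‖v t‖ ≠ 0 := norm_ne_zero_iff.2 h0
  rw [cross3_smul_left, cross3_smul_right, cross3_cross3, real_inner_self_eq_norm_sq,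
    real_inner_comm]
  match_scalars <;> field_simp

section Frame

variable {x z : E3}

lemma inner_cross3_self_of_orthonormal (hx : ⟪x, x⟫ = 1) (hz : ⟪z, z⟫ = 1) (hxz : ⟪x, z⟫ = 0) :
    ⟪cross3 z x, cross3 z x⟫ = 1 := by
  rw [inner_cross3_cross3, hx, hz, real_inner_comm, hxz]; ring

lemma eq_zero_of_inner_frame_eq_zero (hx : ⟪x, x⟫ = 1) (hz : ⟪z, z⟫ = 1) (hxz : ⟪x, z⟫ = 0)
    {w : E3} (hwx : ⟪w, x⟫ = 0) (hwy : ⟪w, cross3 z x⟫ = 0) (hwz : ⟪w, z⟫ = 0) : w = 0 := by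
  have hyw : cross3 (cross3 z x) w = 0 := by
    rw [cross3_cross3, real_inner_comm, hwz, real_inner_comm, hwx, zero_smul, zero_smul, sub_zero]
  have h := cross3_cross3' (cross3 z x) (cross3 z x) w
  rwa [hyw, cross3_zero_right, real_inner_comm, hwy, inner_cross3_self_of_orthonormal hx hz hxz,
    zero_smul, one_smul, zero_sub, eq_comm, neg_eq_zero] at h

lemma eq_sum_inner_smul_frame (hx : ⟪x, x⟫ = 1) (hz : ⟪z, z⟫ = 1) (hxz : ⟪x, z⟫ = 0) (v : E3) :
    v = ⟪v, x⟫ • x + ⟪v, cross3 z x⟫ • cross3 z x + ⟪v, z⟫ • z := by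
  have hyy := inner_cross3_self_of_orthonormal hx hz hxz
  have hyx := inner_cross3_self_right z x
  have hyz := inner_cross3_self_left z x
  rw [← sub_eq_zero]
  refine eq_zero_of_inner_frame_eq_zero hx hz hxz ?_ ?_ ?_ <;>
  · simp only [inner_sub_left, inner_add_left, real_inner_smul_left, hx, hz, hyy, hyx, hyz,
      hxz, real_inner_comm x z, real_inner_comm (cross3 z x) x, real_inner_comm (cross3 z x) z]
    ring

end Frame

/-- With `X'` in the role of `ẋ`, the last three hypotheses are the derivatives of `⟪x, x⟫ = 1`,
`⟪x, z⟫ = 0` and `⟪x, k⟫ = 0` along a motion with `ż = ω × z`. -/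
theorem eq_cross3_of_frame_constraints {x z k ω X' k' : E3} (hx : ⟪x, x⟫ = 1) (hz : ⟪z, z⟫ = 1)
    (hxz : ⟪x, z⟫ = 0) (hxk : ⟪x, k⟫ = 0) (hky : ⟪k, cross3 z x⟫ ≠ 0) (hωz : ⟪ω, z⟫ = 0)
    (hX'x : ⟪X', x⟫ = 0) (hX'z : ⟪x, cross3 ω z⟫ + ⟪X', z⟫ = 0)
    (hX'k : ⟪x, k'⟫ + ⟪X', k⟫ = 0) :
    X' = cross3 (ω + ((⟪ω, cross3 z x⟫ * ⟪k, z⟫ - ⟪k', x⟫) / ⟪k, cross3 z x⟫) • z) x := by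
  set y := cross3 z x with hy
  set ωz := (⟪ω, y⟫ * ⟪k, z⟫ - ⟪k', x⟫) / ⟪k, y⟫
  have hX'z' : ⟪X', z⟫ = -⟪ω, y⟫ := by
    rw [real_inner_comm, inner_cross3_left] at hX'z; linarith
  have hX'y : ⟪X', y⟫ = ωz := by
    have hk := congrArg (⟪X', ·⟫) (eq_sum_inner_smul_frame hx hz hxz k)
    simp only [inner_add_right, real_inner_smul_right, real_inner_comm x k, hxk, hX'x, hX'z',
      ← hy] at hk
    rw [eq_div_iff hky, real_inner_comm x k']
    linear_combination hX'k - hk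
  have hxy : cross3 x y = z := by
    rw [hy, cross3_cross3', hx, hxz, one_smul, zero_smul, sub_zero]
  have hzy : ⟪z, y⟫ = 0 := by rw [real_inner_comm]; exact inner_cross3_self_left z x
  refine sub_eq_zero.1 (eq_zero_of_inner_frame_eq_zero hx hz hxz ?_ ?_ ?_)
  · rw [inner_sub_left, hX'x, inner_cross3_self_right, sub_zero]
  · rw [inner_sub_left, hX'y, inner_cross3_left, hxy, inner_add_left, hωz, real_inner_smul_left, hz]
    ring
  · rw [inner_sub_left, hX'z', inner_cross3_left, ← neg_cross3, inner_neg_right, inner_add_left,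
      real_inner_smul_left, hzy]
    ring

theorem stmt17_general (ρ k : ℝ → EuclideanSpace ℝ (Fin 3))
    (ρ' k' : EuclideanSpace ℝ (Fin 3)) (t : ℝ)
    (hρ : HasDerivAt ρ ρ' t) (hk : HasDerivAt k k' t)
    (hρ0 : ρ t ≠ 0)
    (z x y : ℝ → EuclideanSpace ℝ (Fin 3))
    (hz : ∀ s, z s = ‖ρ s‖⁻¹ • ρ s)
    (hzk : cross3 (z t) (k t) ≠ 0)
    (hx : ∀ s, x s = ‖cross3 (z s) (k s)‖⁻¹ • cross3 (z s) (k s))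
    (hy : ∀ s, y s = cross3 (z s) (x s))
    (ωperp ωD : EuclideanSpace ℝ (Fin 3)) (ωy ωz : ℝ)
    (hωperp : ωperp = (‖ρ t‖ ^ 2)⁻¹ • cross3 (ρ t) ρ')
    (hωy : ωy = ⟪ωperp, y t⟫)
    (hωz : ωz = (ωy * ⟪k t, z t⟫ - ⟪k', x t⟫) / ⟪k t, y t⟫)
    (hωD : ωD = ωperp + ωz • z t) :
    HasDerivAt z (cross3 ωD (z t)) t ∧
      HasDerivAt x (cross3 ωD (x t)) t ∧
      HasDerivAt y (cross3 ωD (y t)) t := by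
  have hzD : cross3 ωD (z t) = cross3 ωperp (z t) := by
    rw [hωD, cross3_add_left, cross3_smul_left, cross3_self, smul_zero, add_zero]
  have hzd : HasDerivAt z (cross3 ωD (z t)) t := by
    rw [hzD, hz t, hωperp, funext hz]; exact hρ.inv_norm_smul_eq_cross3 hρ0
  obtain ⟨X', hxd, hX'x⟩ : ∃ X', HasDerivAt x X' t ∧ ⟪X', x t⟫ = 0 := by
    have hxd := (hzd.cross3 hk).inv_norm_smul_eq_cross3 hzk
    simp only [← hx] at hxd
    exact ⟨_, hxd, inner_cross3_self_right _ _⟩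
  have hxz : ∀ s, ⟪x s, z s⟫ = 0 := fun s => by
    rw [hx s, real_inner_smul_left, inner_cross3_self_left, mul_zero]
  have hxk : ∀ s, ⟪x s, k s⟫ = 0 := fun s => by
    rw [hx s, real_inner_smul_left, inner_cross3_self_right, mul_zero]
  have hky : ⟪k t, cross3 (z t) (x t)⟫ ≠ 0 := by
    rw [hx t, cross3_smul_right, real_inner_smul_right, ← inner_cross3_left, ← neg_cross3 (z t),
      inner_neg_left, real_inner_self_eq_norm_sq]
    simpa [norm_ne_zero_iff] using hzk
  have hX' : X' = cross3 ωD (x t) := by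
    rw [hωD, hωz, hωy, hy t]
    refine eq_cross3_of_frame_constraints ?_ ?_ (hxz t) (hxk t) hky ?_ hX'x ?_
      (inner_add_inner_eq_zero_of_inner_eq_const hxd hk hxk)
    · rw [hx t]; exact inner_inv_norm_smul_self hzk
    · rw [hz t]; exact inner_inv_norm_smul_self hρ0
    · rw [hωperp, hz t, real_inner_smul_left, real_inner_smul_right, inner_cross3_self_left]
      ring
    · rw [← hzD]; exact inner_add_inner_eq_zero_of_inner_eq_const hxd hzd hxz
  subst hX'
  refine ⟨hzd, hxd, ?_⟩
  rw [hy t, leibniz_cross3, add_comm, funext hy]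
  exact hzd.cross3 hxd

/-- the paper's main analytic result: ω_D = ω_{z⊥} + ω_z ẑ, with
ω_{z⊥} = (ρ × ρ̇)/‖ρ‖² and ω_z = (ω_y k_z − k̇_x)/k_y, is the angular velocity of the
whole desired frame (x̂, ŷ, ẑ). -/
theorem stmt17 (ρ k : ℝ → EuclideanSpace ℝ (Fin 3))
    (ρ' k' : EuclideanSpace ℝ (Fin 3)) (t : ℝ)
    (hρ : HasDerivAt ρ ρ' t) (hk : HasDerivAt k k' t)
    (hρ0 : ρ t ≠ 0)
    (z x y : ℝ → EuclideanSpace ℝ (Fin 3))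
    (hz : ∀ s, z s = ‖ρ s‖⁻¹ • ρ s)
    (hzk : cross3 (z t) (k t) ≠ 0)
    (hx : ∀ s, x s = ‖cross3 (z s) (k s)‖⁻¹ • cross3 (z s) (k s))
    (hxdiff : DifferentiableAt ℝ x t)
    (hy : ∀ s, y s = cross3 (z s) (x s))
    (ωperp ωD : EuclideanSpace ℝ (Fin 3)) (ωy ωz : ℝ)
    (hωperp : ωperp = (‖ρ t‖ ^ 2)⁻¹ • cross3 (ρ t) ρ')
    (hωy : ωy = ⟪ωperp, y t⟫)
    (hωz : ωz = (ωy * ⟪k t, z t⟫ - ⟪k', x t⟫) / ⟪k t, y t⟫)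
    (hωD : ωD = ωperp + ωz • z t) :
    HasDerivAt z (cross3 ωD (z t)) t ∧
      HasDerivAt x (cross3 ωD (x t)) t ∧
      HasDerivAt y (cross3 ωD (y t)) t :=
  stmt17_general ρ k ρ' k' t hρ hk hρ0 z x y hz hzk hx hy ωperp ωD ωy ωz hωperp hωy hωz hωD
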